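/- Let S be an inverse semigroup with zero, let e be an idempotent with a finite cover {e₁,...,eₘ} (all eᵢ ≤ e idempotent), and let a ∈ S be arbitrary. Then either aea⁻¹ = 0, or {ae₁a⁻¹,...,aeₘa⁻¹} is a cover of the idempotent aea⁻¹. -/

import Mathlib

/-- An inverse semigroup with zero: associative multiplication, unique
generalized inverses, and a multiplicatively absorbing zero. -/
structure InvSemigroupZero (S : Type*) [Mul S] [Inv S] [Zero S] : Prop where
  mul_assoc : ∀ a b c : S, a * b * c = a * (b * c)
  mul_inv_mul : ∀ a : S, a * a⁻¹ * a = a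
  inv_mul_inv : ∀ a : S, a⁻¹ * a * a⁻¹ = a⁻¹
  inv_unique : ∀ a t : S, a * t * a = a → t * a * t = t → t = a⁻¹
  zero_mul : ∀ a : S, 0 * a = 0
  mul_zero : ∀ a : S, a * 0 = 0

def IsIdem {S : Type*} [Mul S] (e : S) : Prop := e * e = e

/-- The natural partial order: `s ≤ t` iff `s = t e` for some idempotent `e`. -/
def natLe {S : Type*} [Mul S] (s t : S) : Prop := ∃ e : S, IsIdem e ∧ s = t * e

/-- `s` and `t` are compatible iff `s⁻¹ t` and `s t⁻¹` are idempotents. -/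
def Compat {S : Type*} [Mul S] [Inv S] (s t : S) : Prop :=
  IsIdem (s⁻¹ * t) ∧ IsIdem (s * t⁻¹)

namespace InvSemigroupZero

variable {S : Type*} [Mul S] [Inv S] [Zero S] (hS : InvSemigroupZero S)
include hS

theorem inv_inv (a : S) : a⁻¹⁻¹ = a :=
  (hS.inv_unique a⁻¹ a (hS.inv_mul_inv a) (hS.mul_inv_mul a)).symm

theorem inv_eq_self_of_isIdem {e : S} (he : IsIdem e) : e⁻¹ = e :=
  (hS.inv_unique e e (by rw [he, he]) (by rw [he, he])).symm

theorem inv_mul_inv_assoc (a : S) : a⁻¹ * (a * a⁻¹) = a⁻¹ := by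
  rw [← hS.mul_assoc, hS.inv_mul_inv]

theorem mul_inv_mul_mul (a x : S) : a * (a⁻¹ * (a * x)) = a * x := by
  rw [← hS.mul_assoc, ← hS.mul_assoc, hS.mul_inv_mul]

theorem inv_mul_inv_mul (a x : S) : a⁻¹ * (a * (a⁻¹ * x)) = a⁻¹ * x := by
  rw [← hS.mul_assoc, ← hS.mul_assoc, hS.inv_mul_inv]

theorem mul_mul_of_isIdem {e : S} (he : IsIdem e) (x : S) : e * (e * x) = e * x := by
  rw [← hS.mul_assoc, he]

theorem isIdem_inv_mul_self (a : S) : IsIdem (a⁻¹ * a) := by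
  rw [IsIdem, ← hS.mul_assoc, hS.inv_mul_inv]

/-- `f (ef)⁻¹ e` is an idempotent inverse of `ef`, so `ef` is the inverse of an idempotent. -/
theorem isIdem_mul {e f : S} (he : IsIdem e) (hf : IsIdem f) : IsIdem (e * f) := by
  set s := f * (e * f)⁻¹ * e with hs
  have hsIdem : IsIdem s := by
    calc s * s = f * ((e * f)⁻¹ * (e * f) * (e * f)⁻¹) * e := by
          simp only [hs, hS.mul_assoc]
      _ = s := by rw [hS.inv_mul_inv, hs, hS.mul_assoc]
  have hsInv : s = (e * f)⁻¹ := by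
    apply hS.inv_unique
    · calc e * f * s * (e * f) = e * f * (e * f)⁻¹ * (e * f) := by
            simp only [hs, hS.mul_assoc, hS.mul_mul_of_isIdem he, hS.mul_mul_of_isIdem hf]
        _ = e * f := hS.mul_inv_mul _
    · calc s * (e * f) * s = f * ((e * f)⁻¹ * (e * f) * (e * f)⁻¹) * e := by
            simp only [hs, hS.mul_assoc, hS.mul_mul_of_isIdem he, hS.mul_mul_of_isIdem hf]
        _ = s := by rw [hS.inv_mul_inv, hs, hS.mul_assoc]
  rw [← hS.inv_inv (e * f), ← hsInv, hS.inv_eq_self_of_isIdem hsIdem]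
  exact hsIdem

/-- `fe` is an inverse of `ef`, and idempotents are self-inverse. -/
theorem isIdem_comm {e f : S} (he : IsIdem e) (hf : IsIdem f) : e * f = f * e := by
  have hfe : f * e = (e * f)⁻¹ := by
    apply hS.inv_unique
    · calc e * f * (f * e) * (e * f) = e * f * (e * f) := by
            simp only [hS.mul_assoc, hS.mul_mul_of_isIdem he, hS.mul_mul_of_isIdem hf]
        _ = e * f := hS.isIdem_mul he hf
    · calc f * e * (e * f) * (f * e) = f * e * (f * e) := by
            simp only [hS.mul_assoc, hS.mul_mul_of_isIdem he, hS.mul_mul_of_isIdem hf]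
        _ = f * e := hS.isIdem_mul hf he
  rw [hfe, hS.inv_eq_self_of_isIdem (hS.isIdem_mul he hf)]

theorem conj_mul_conj {f : S} (hf : IsIdem f) (a e : S) :
    a * e * a⁻¹ * (a * f * a⁻¹) = a * (e * f) * a⁻¹ := by
  calc a * e * a⁻¹ * (a * f * a⁻¹) = a * (e * (f * (a⁻¹ * a)) * a⁻¹) := by
        simp only [hS.mul_assoc, hS.isIdem_comm hf (hS.isIdem_inv_mul_self a)]
    _ = a * (e * f) * a⁻¹ := by simp only [hS.mul_assoc, hS.inv_mul_inv_assoc]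

theorem isIdem_conj {e : S} (he : IsIdem e) (a : S) : IsIdem (a * e * a⁻¹) := by
  rw [IsIdem, hS.conj_mul_conj he, he]

theorem conj_inv_conj {a f : S} (hf : IsIdem f) (hle : a⁻¹ * a * f = f) :
    a⁻¹ * (a * f * a⁻¹) * a = f := by
  calc a⁻¹ * (a * f * a⁻¹) * a = a⁻¹ * a * f * (a⁻¹ * a) := by simp only [hS.mul_assoc]
    _ = f := by rw [hle, ← hS.isIdem_comm (hS.isIdem_inv_mul_self a) hf, hle]

theorem isIdem_and_mul_eq_of_natLe {x t : S} (ht : IsIdem t) (h : natLe x t) :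
    IsIdem x ∧ t * x = x := by
  obtain ⟨g, hg, rfl⟩ := h
  exact ⟨hS.isIdem_mul ht hg, by rw [← hS.mul_assoc, ht]⟩

theorem natLe_conj {c e : S} (h : natLe c e) (a : S) : natLe (a * c * a⁻¹) (a * e * a⁻¹) := by
  obtain ⟨g, hg, rfl⟩ := h
  exact ⟨a * g * a⁻¹, hS.isIdem_conj hg a, (hS.conj_mul_conj hg a e).symm⟩

theorem natLe_inv_conj {a e x : S} (he : IsIdem e) (hx : natLe x (a * e * a⁻¹)) :
    natLe (a⁻¹ * x * a) e := by
  obtain ⟨hxIdem, htx⟩ := hS.isIdem_and_mul_eq_of_natLe (hS.isIdem_conj he a) hx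
  have hyIdem : IsIdem (a⁻¹ * x * a) := by
    simpa only [hS.inv_inv] using hS.isIdem_conj hxIdem a⁻¹
  refine ⟨_, hyIdem, ?_⟩
  calc a⁻¹ * x * a = a⁻¹ * a * e * (a⁻¹ * x * a) := by
        conv_lhs => rw [← htx]
        simp only [hS.mul_assoc]
    _ = e * (a⁻¹ * x * a) := by
        rw [← hS.isIdem_comm he (hS.isIdem_inv_mul_self a)]
        simp only [hS.mul_assoc, hS.inv_mul_inv_mul]

/-- Conjugating by `a⁻¹` carries `x ≤ a e a⁻¹` to `y ≤ e`, and `x (a c a⁻¹) = a (y c) a⁻¹`;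
both conjugations are undone because `x ≤ a a⁻¹` and `y c ≤ a⁻¹ a`. -/
theorem exists_mul_conj_ne_zero {a e x : S} {C : Finset S} (he : IsIdem e)
    (hC : ∀ c ∈ C, IsIdem c) (hcov : ∀ y : S, natLe y e → y ≠ 0 → ∃ c ∈ C, y * c ≠ 0)
    (hx : natLe x (a * e * a⁻¹)) (hx0 : x ≠ 0) : ∃ c ∈ C, x * (a * c * a⁻¹) ≠ 0 := by
  obtain ⟨hxIdem, htx⟩ := hS.isIdem_and_mul_eq_of_natLe (hS.isIdem_conj he a) hx
  have hxle : a⁻¹⁻¹ * a⁻¹ * x = x := by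
    rw [hS.inv_inv, ← htx]
    simp only [hS.mul_assoc, hS.mul_inv_mul_mul]
  have hxy : a * (a⁻¹ * x * a) * a⁻¹ = x := by
    simpa only [hS.inv_inv, hS.mul_assoc] using hS.conj_inv_conj hxIdem hxle
  have hy0 : a⁻¹ * x * a ≠ 0 := fun h => hx0 (by rw [← hxy, h, hS.mul_zero, hS.zero_mul])
  obtain ⟨c, hc, hyc⟩ := hcov _ (hS.natLe_inv_conj he hx) hy0
  refine ⟨c, hc, fun h => hyc ?_⟩
  have hyIdem : IsIdem (a⁻¹ * x * a) :=
    (hS.isIdem_and_mul_eq_of_natLe he (hS.natLe_inv_conj he hx)).1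
  have hycle : a⁻¹ * a * (a⁻¹ * x * a * c) = a⁻¹ * x * a * c := by
    simp only [hS.mul_assoc, hS.inv_mul_inv_mul]
  rw [← hS.conj_inv_conj (hS.isIdem_mul hyIdem (hC c hc)) hycle, ← hS.conj_mul_conj (hC c hc),
    hxy, h, hS.mul_zero, hS.zero_mul]

end InvSemigroupZero

/-- If `{e₁,…,eₘ}` is a cover of the idempotent `e` (meets of idempotents are
products) and `a` is arbitrary, then either `a e a⁻¹ = 0` or
`{a e₁ a⁻¹, …, a eₘ a⁻¹}` is a cover of the idempotent `a e a⁻¹`. -/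
theorem conjugate_cover {S : Type*} [Mul S] [Inv S] [Zero S]
    (hS : InvSemigroupZero S) (e : S) (he : IsIdem e) (C : Finset S)
    (hCle : ∀ c ∈ C, IsIdem c ∧ natLe c e)
    (hcov : ∀ x : S, natLe x e → x ≠ 0 → ∃ c ∈ C, x * c ≠ 0) (a : S) :
    a * e * a⁻¹ = 0 ∨
      ((∀ c ∈ C, natLe (a * c * a⁻¹) (a * e * a⁻¹)) ∧
        ∀ x : S, natLe x (a * e * a⁻¹) → x ≠ 0 →
          ∃ c ∈ C, x * (a * c * a⁻¹) ≠ 0) := by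
  right
  exact ⟨fun c hc => hS.natLe_conj (hCle c hc).2 a,
    fun x hx hx0 => hS.exists_mul_conj_ne_zero he (fun c hc => (hCle c hc).1) hcov hx hx0⟩
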